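/- For every formula α in negation normal form, there exists a derivation from α ∨ α to α using only atomic contraction (a ∨ a → a), medial, and equality steps, of length O(|α|) and size O(|α|²). -/

import Mathlib

/-- Formulae of the calculus of structures in negation normal form. -/
inductive Formula : Type
  | top : Formula
  | bot : Formula
  | atom : ℕ → Formula
  | natom : ℕ → Formula
  | or : Formula → Formula → Formula
  | and : Formula → Formula → Formula
deriving DecidableEq

/-- Boolean evaluation of a formula under an assignment. -/
def Formula.eval (v : ℕ → Bool) : Formula → Bool
  | .top => true
  | .bot => false
  | .atom n => v n
  | .natom n => !(v n)
  | .or a b => a.eval v || b.eval v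
  | .and a b => a.eval v && b.eval v

/-- Size of a formula: number of unit and atom occurrences. -/
def Formula.size : Formula → ℕ
  | .top => 1
  | .bot => 1
  | .atom _ => 1
  | .natom _ => 1
  | .or a b => a.size + b.size
  | .and a b => a.size + b.size

/-- De Morgan dual (negation in negation normal form). -/
def Formula.dual : Formula → Formula
  | .top => .bot
  | .bot => .top
  | .atom n => .natom n
  | .natom n => .atom n
  | .or a b => .and a.dual b.dual
  | .and a b => .or a.dual b.dual

/-- The equality relation `=` on formulae: commutativity, associativity, unit
laws, closed under reflexivity, symmetry, transitivity and context closure. -/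
inductive FEq : Formula → Formula → Prop
  | orComm (a b) : FEq (.or a b) (.or b a)
  | andComm (a b) : FEq (.and a b) (.and b a)
  | orAssoc (a b c) : FEq (.or (.or a b) c) (.or a (.or b c))
  | andAssoc (a b c) : FEq (.and (.and a b) c) (.and a (.and b c))
  | orBot (a) : FEq (.or a .bot) a
  | andTop (a) : FEq (.and a .top) a
  | topTop : FEq (.or .top .top) .top
  | botBot : FEq (.and .bot .bot) .bot
  | refl (a) : FEq a a
  | symm {a b} : FEq a b → FEq b a
  | trans {a b c} : FEq a b → FEq b c → FEq a c
  | orCongL {a b} (c) : FEq a b → FEq (.or a c) (.or b c)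
  | orCongR {a b} (c) : FEq a b → FEq (.or c a) (.or c b)
  | andCongL {a b} (c) : FEq a b → FEq (.and a c) (.and b c)
  | andCongR {a b} (c) : FEq a b → FEq (.and c a) (.and c b)

/-- Closure of a rule relation under arbitrary formula contexts. -/
inductive CtxStep (R : Formula → Formula → Prop) : Formula → Formula → Prop
  | base {a b} : R a b → CtxStep R a b
  | orL {a b} (c) : CtxStep R a b → CtxStep R (.or a c) (.or b c)
  | orR {a b} (c) : CtxStep R a b → CtxStep R (.or c a) (.or c b)
  | andL {a b} (c) : CtxStep R a b → CtxStep R (.and a c) (.and b c)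
  | andR {a b} (c) : CtxStep R a b → CtxStep R (.and c a) (.and c b)

/-- `Deriv R α β l s`: there is a derivation from premiss `α` to conclusion `β`
using rules from `R` (applied inside contexts), of length `l` and total size `s`
(the sum of the sizes of all formulae appearing in the derivation). -/
inductive Deriv (R : Formula → Formula → Prop) : Formula → Formula → ℕ → ℕ → Prop
  | refl (a) : Deriv R a a 0 a.size
  | step {a b c l s} : CtxStep R a b → Deriv R b c l s → Deriv R a c (l + 1) (s + a.size)

/-- Rules allowed in Lemma LemGContr: atomic contraction, medial and equality. -/
inductive AcMedEq : Formula → Formula → Prop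
  | ac (a : ℕ) : AcMedEq (.or (.atom a) (.atom a)) (.atom a)
  | ac' (a : ℕ) : AcMedEq (.or (.natom a) (.natom a)) (.natom a)
  | med (A B C D : Formula) :
      AcMedEq (.or (.and A B) (.and C D)) (.and (.or A C) (.or B D))
  | eqv {a b : Formula} : FEq a b → AcMedEq a b

lemma Formula.size_pos : ∀ α : Formula, 1 ≤ α.size := by
  intro α
  induction α <;> simp [Formula.size] <;> omega

lemma derivTrans {R} {a b c : Formula} {l1 s1 l2 s2 : ℕ}
    (h1 : Deriv R a b l1 s1) (h2 : Deriv R b c l2 s2) :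
    ∃ s, Deriv R a c (l1 + l2) s ∧ s ≤ s1 + s2 := by
  induction h1 with
  | refl a => exact ⟨s2, by simpa using h2, by omega⟩
  | @step a b' c' l' s' hab _ ih =>
    obtain ⟨s, hd, hs⟩ := ih h2
    refine ⟨s + a.size, ?_, by omega⟩
    have hstep := Deriv.step hab hd
    have he : l' + 1 + l2 = l' + l2 + 1 := by omega
    rwa [he]

lemma derivLift {R} (F : Formula → Formula) (k : ℕ)
    (hF : ∀ a b, CtxStep R a b → CtxStep R (F a) (F b))
    (hs : ∀ a, (F a).size = a.size + k) {a b l s}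
    (h : Deriv R a b l s) : Deriv R (F a) (F b) l (s + (l + 1) * k) := by
  induction h with
  | refl a =>
    have : (F a).size = a.size + (0 + 1) * k := by rw [hs]; ring
    rw [← this]
    exact Deriv.refl (F a)
  | @step a b c l s hab _ ih =>
    have h2 := Deriv.step (hF _ _ hab) ih
    have he : s + (l + 1) * k + (F a).size = s + a.size + (l + 1 + 1) * k := by
      rw [hs]; ring
    rwa [he] at h2

lemma derivStep {R} {a b : Formula} (h : R a b) :
    Deriv R a b 1 (a.size + b.size) := by
  have := Deriv.step (CtxStep.base h) (Deriv.refl b)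
  simpa [Nat.add_comm] using this

lemma feq_or_shuffle (β γ : Formula) :
    FEq ((β.or γ).or (β.or γ)) ((β.or β).or (γ.or γ)) := by
  have h1 : FEq ((β.or γ).or (β.or γ)) (β.or (γ.or (β.or γ))) := FEq.orAssoc _ _ _
  have inner : FEq (γ.or (β.or γ)) (β.or (γ.or γ)) :=
    FEq.trans (FEq.symm (FEq.orAssoc _ _ _))
      (FEq.trans (FEq.orCongL _ (FEq.orComm _ _)) (FEq.orAssoc _ _ _))
  exact FEq.trans h1 (FEq.trans (FEq.orCongR _ inner) (FEq.symm (FEq.orAssoc _ _ _)))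

lemma sizeBound {a b lB lG sB sG s12 s : ℕ} (ha : 1 ≤ a) (hb : 1 ≤ b)
    (hlB : lB + 1 ≤ 2 * a) (hlG : lG + 1 ≤ 2 * b)
    (hsB : sB ≤ 7 * a ^ 2) (hsG : sG ≤ 7 * b ^ 2)
    (hs12 : s12 ≤ sB + (lB + 1) * (b + b) + (sG + (lG + 1) * a))
    (hs : s ≤ a + b + (a + b) + (a + a + (b + b)) + s12) :
    s ≤ 7 * (a + b) ^ 2 := by nlinarith

lemma lemGContr_aux : ∀ α : Formula, ∃ l s : ℕ,
    Deriv AcMedEq (.or α α) α l s ∧ l + 1 ≤ 2 * α.size ∧ s ≤ 7 * α.size ^ 2 := by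
  intro α
  induction α with
  | top =>
    exact ⟨1, 3, by simpa [Formula.size] using derivStep (AcMedEq.eqv FEq.topTop),
      by simp [Formula.size], by simp [Formula.size]⟩
  | bot =>
    exact ⟨1, 3, by simpa [Formula.size] using derivStep (AcMedEq.eqv (FEq.orBot Formula.bot)),
      by simp [Formula.size], by simp [Formula.size]⟩
  | atom n =>
    exact ⟨1, 3, by simpa [Formula.size] using derivStep (AcMedEq.ac n),
      by simp [Formula.size], by simp [Formula.size]⟩
  | natom n =>
    exact ⟨1, 3, by simpa [Formula.size] using derivStep (AcMedEq.ac' n),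
      by simp [Formula.size], by simp [Formula.size]⟩
  | or β γ ihβ ihγ =>
    obtain ⟨lβ, sβ, dβ, hlβ, hsβ⟩ := ihβ
    obtain ⟨lγ, sγ, dγ, hlγ, hsγ⟩ := ihγ
    have hβ1 := β.size_pos
    have hγ1 := γ.size_pos
    -- first step: equality
    have d0 : Deriv AcMedEq ((β.or γ).or (β.or γ)) ((β.or β).or (γ.or γ)) 1
        (((β.or γ).or (β.or γ)).size + ((β.or β).or (γ.or γ)).size) :=
      derivStep (AcMedEq.eqv (feq_or_shuffle β γ))
    -- lift β-derivation into context _ ∨ (γ∨γ)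
    have d1 : Deriv AcMedEq ((β.or β).or (γ.or γ)) (β.or (γ.or γ)) lβ
        (sβ + (lβ + 1) * (γ.or γ).size) :=
      derivLift (fun x => x.or (γ.or γ)) (γ.or γ).size
        (fun a b h => CtxStep.orL _ h) (fun a => rfl) dβ
    -- lift γ-derivation into context β ∨ _
    have d2 : Deriv AcMedEq (β.or (γ.or γ)) (β.or γ) lγ
        (sγ + (lγ + 1) * β.size) := by
      have := derivLift (fun x => β.or x) β.size
        (fun a b h => CtxStep.orR _ h) (fun a => by simp only [Formula.size]; omega) dγ
      exact this
    obtain ⟨s12, d12, hs12⟩ := derivTrans d1 d2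
    obtain ⟨s, d, hs⟩ := derivTrans d0 d12
    refine ⟨1 + (lβ + lγ), s, d, ?_, ?_⟩
    · simp only [Formula.size]; omega
    · simp only [Formula.size] at hs hs12 ⊢
      exact sizeBound hβ1 hγ1 hlβ hlγ hsβ hsγ hs12 hs
  | and β γ ihβ ihγ =>
    obtain ⟨lβ, sβ, dβ, hlβ, hsβ⟩ := ihβ
    obtain ⟨lγ, sγ, dγ, hlγ, hsγ⟩ := ihγ
    have hβ1 := β.size_pos
    have hγ1 := γ.size_pos
    have d0 : Deriv AcMedEq ((β.and γ).or (β.and γ)) ((β.or β).and (γ.or γ)) 1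
        (((β.and γ).or (β.and γ)).size + ((β.or β).and (γ.or γ)).size) :=
      derivStep (AcMedEq.med β γ β γ)
    have d1 : Deriv AcMedEq ((β.or β).and (γ.or γ)) (β.and (γ.or γ)) lβ
        (sβ + (lβ + 1) * (γ.or γ).size) :=
      derivLift (fun x => x.and (γ.or γ)) (γ.or γ).size
        (fun a b h => CtxStep.andL _ h) (fun a => rfl) dβ
    have d2 : Deriv AcMedEq (β.and (γ.or γ)) (β.and γ) lγ
        (sγ + (lγ + 1) * β.size) := by
      have := derivLift (fun x => β.and x) β.size
        (fun a b h => CtxStep.andR _ h) (fun a => by simp only [Formula.size]; omega) dγ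
      exact this
    obtain ⟨s12, d12, hs12⟩ := derivTrans d1 d2
    obtain ⟨s, d, hs⟩ := derivTrans d0 d12
    refine ⟨1 + (lβ + lγ), s, d, ?_, ?_⟩
    · simp only [Formula.size]; omega
    · simp only [Formula.size] at hs hs12 ⊢
      exact sizeBound hβ1 hγ1 hlβ hlγ hsβ hsγ hs12 hs

/-- Lemma LemGContr: for every formula `α` there is a derivation
from `α ∨ α` to `α` using only atomic contraction, medial and equality, of
length `O(|α|)` and size `O(|α|²)`. -/
theorem atomic_contraction_derivable :
    ∃ C : ℕ, ∀ α : Formula, ∃ l s : ℕ,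
      Deriv AcMedEq (.or α α) α l s ∧
      l ≤ C * α.size ∧ s ≤ C * α.size ^ 2 := by
  refine ⟨7, fun α => ?_⟩
  obtain ⟨l, s, d, hl, hs⟩ := lemGContr_aux α
  have := α.size_pos
  exact ⟨l, s, d, by nlinarith, hs⟩
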